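/- Let π = ⊕[ξ_1,…,ξ_r] with r ≥ 2, where each ξ_i is an increasing oscillation, and let p be a pin representation of π. Then there exists i ∈ {1,…,r−1} such that: the first |ξ_i| + |ξ_{i+1}| pins of p are exactly the points of the i-th and (i+1)-th children; every child with index outside {i, i+1} is read in one piece by p; for all indices j < j' ≤ i−1, the j'-th child is read entirely before the j-th child; and for all indices j, j' with i+2 ≤ j < j', the j-th child is read entirely before the j'-th child. -/
import Mathlib


namespace PinStmt

abbrev Point : Type := ℝ × ℝ

inductive Letter : Type
  | n1 | n2 | n3 | n4 | U | D | L | R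
deriving DecidableEq

def Letter.isNum : Letter → Bool
  | .n1 | .n2 | .n3 | .n4 => true
  | _ => false

/-- `c` is one of the numeral letters 1,2,3,4. -/
def Letter.IsNumeral (c : Letter) : Prop := c.isNum = true

/-- `c` is one of the direction letters U,D,L,R. -/
def Letter.IsDirection (c : Letter) : Prop := c.isNum = false

/-- `q i` lies strictly above all of `q 0, …, q (i-1)`. -/
def AboveAll (q : ℕ → Point) (i : ℕ) : Prop := ∀ j < i, (q j).2 < (q i).2
def BelowAll (q : ℕ → Point) (i : ℕ) : Prop := ∀ j < i, (q i).2 < (q j).2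
def RightAll (q : ℕ → Point) (i : ℕ) : Prop := ∀ j < i, (q j).1 < (q i).1
def LeftAll  (q : ℕ → Point) (i : ℕ) : Prop := ∀ j < i, (q i).1 < (q j).1

/-- The vertical line through `q i` strictly separates `q (i-1)` from `{q j | j < i-1}`. -/
def VLineSep (q : ℕ → Point) (i : ℕ) : Prop :=
  ((q (i - 1)).1 < (q i).1 ∧ ∀ j < i - 1, (q i).1 < (q j).1) ∨
  ((q i).1 < (q (i - 1)).1 ∧ ∀ j < i - 1, (q j).1 < (q i).1)

/-- The horizontal line through `q i` strictly separates `q (i-1)` from `{q j | j < i-1}`. -/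
def HLineSep (q : ℕ → Point) (i : ℕ) : Prop :=
  ((q (i - 1)).2 < (q i).2 ∧ ∀ j < i - 1, (q i).2 < (q j).2) ∨
  ((q i).2 < (q (i - 1)).2 ∧ ∀ j < i - 1, (q j).2 < (q i).2)

/-- Separation condition for the pin `q i`. -/
def SepCond (q : ℕ → Point) (i : ℕ) : Prop := VLineSep q i ∨ HLineSep q i

/-- Independence condition: neither line through `q i` splits `{q j | j < i}` in two
nonempty parts. -/
def IndepCond (q : ℕ → Point) (i : ℕ) : Prop :=
  ¬((∃ j < i, (q j).1 < (q i).1) ∧ (∃ j < i, (q i).1 < (q j).1)) ∧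
  ¬((∃ j < i, (q j).2 < (q i).2) ∧ (∃ j < i, (q i).2 < (q j).2))

/-- `q i` lies outside the bounding box of `{q j | j < i}`. -/
def OutsideBox (q : ℕ → Point) (i : ℕ) : Prop :=
  RightAll q i ∨ LeftAll q i ∨ AboveAll q i ∨ BelowAll q i

/-- `(q 0, …, q (m-1))` is a pin sequence. -/
def IsPinSeq (q : ℕ → Point) (m : ℕ) : Prop :=
  (∀ i < m, ∀ j < m, i ≠ j → (q i).1 ≠ (q j).1 ∧ (q i).2 ≠ (q j).2) ∧
  (∀ i, 1 ≤ i → i < m → OutsideBox q i ∧ (SepCond q i ∨ IndepCond q i))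

/-- `(p 0, …, p (n-1))` is a pin representation of `σ`, where `f` sends the time index of a
pin to the position (index) of the corresponding point in the diagram of `σ`. -/
def IsPinReprWith {n : ℕ} (σ : Equiv.Perm (Fin n)) (p : ℕ → Point)
    (f : Fin n ≃ Fin n) : Prop :=
  IsPinSeq p n ∧ ∀ j k : Fin n,
    ((p j.val).1 < (p k.val).1 ↔ f j < f k) ∧
    ((p j.val).2 < (p k.val).2 ↔ σ (f j) < σ (f k))

def IsPinRepr {n : ℕ} (σ : Equiv.Perm (Fin n)) (p : ℕ → Point) : Prop :=
  ∃ f, IsPinReprWith σ p f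

/-- `σ` is a pin-permutation. -/
def IsPinPerm {n : ℕ} (σ : Equiv.Perm (Fin n)) : Prop := ∃ p, IsPinRepr σ p

/-- Prepend the origin `p0` to the sequence of pins `p`. -/
def withOrigin (p0 : Point) (p : ℕ → Point) : ℕ → Point
  | 0 => p0
  | i + 1 => p i

/-- The letter encoding the pin `q i` (where `q 0` is the origin). -/
def LetterIs (q : ℕ → Point) (i : ℕ) : Letter → Prop
  | .U => 2 ≤ i ∧ SepCond q i ∧ AboveAll q i
  | .D => 2 ≤ i ∧ SepCond q i ∧ BelowAll q i
  | .L => 2 ≤ i ∧ SepCond q i ∧ LeftAll q i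
  | .R => 2 ≤ i ∧ SepCond q i ∧ RightAll q i
  | .n1 => IndepCond q i ∧ RightAll q i ∧ AboveAll q i
  | .n2 => IndepCond q i ∧ LeftAll q i ∧ AboveAll q i
  | .n3 => IndepCond q i ∧ LeftAll q i ∧ BelowAll q i
  | .n4 => IndepCond q i ∧ RightAll q i ∧ BelowAll q i

/-- `w` is the pin word associated with the pin sequence `(q 0, q 1, …, q n)`,
whose origin is `q 0`. -/
def WordOf (q : ℕ → Point) (n : ℕ) (w : List Letter) : Prop :=
  w.length = n ∧ ∀ i < n, LetterIs q (i + 1) (w.getD i Letter.U)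

/-- `P(σ)`: the set of pin words of the permutation `σ`. -/
def PinWords {n : ℕ} (σ : Equiv.Perm (Fin n)) : Set (List Letter) :=
  { w | ∃ (p : ℕ → Point) (p0 : Point), IsPinRepr σ p ∧
        IsPinSeq (withOrigin p0 p) (n + 1) ∧ WordOf (withOrigin p0 p) n w }

/-- The set of pin words associated with the fixed pin representation `p`
over all admissible origins. -/
def WordsOfRepr (n : ℕ) (p : ℕ → Point) : Set (List Letter) :=
  { w | ∃ p0 : Point, IsPinSeq (withOrigin p0 p) (n + 1) ∧ WordOf (withOrigin p0 p) n w }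

/-- `(p 0, …, p (n-1))` is a proper pin sequence: every pin from the third one on
satisfies the separation condition. -/
def IsProperSeq (p : ℕ → Point) (n : ℕ) : Prop :=
  IsPinSeq p n ∧ ∀ i, 2 ≤ i → i < n → SepCond p i

/-- `σ` is a proper pin-permutation. -/
def IsProperPinPerm {n : ℕ} (σ : Equiv.Perm (Fin n)) : Prop :=
  ∃ p, IsPinRepr σ p ∧ IsProperSeq p n

/-- A strict pin word: a numeral followed only by directions. -/
def IsStrict (w : List Letter) : Prop :=
  ∃ c cs, w = c :: cs ∧ c.IsNumeral ∧ ∀ d ∈ cs, d.IsDirection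

/-- A quasi-strict pin word: two numerals followed only by directions. -/
def IsQuasiStrict (w : List Letter) : Prop :=
  ∃ c₁ c₂ cs, w = c₁ :: c₂ :: cs ∧ c₁.IsNumeral ∧ c₂.IsNumeral ∧ ∀ d ∈ cs, d.IsDirection

/-- `w` is a pin word (of some permutation). -/
def IsPinWord (w : List Letter) : Prop :=
  ∃ (n : ℕ) (σ : Equiv.Perm (Fin n)), w ∈ PinWords σ

/-- `SP`: the set of strict pin words. -/
def SPset : Set (List Letter) := { w | IsPinWord w ∧ IsStrict w }

def phi2 : Letter → Letter → List Letter
  | .n1, .R => [.R, .U, .R]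
  | .n2, .R => [.L, .U, .R]
  | .n3, .R => [.L, .D, .R]
  | .n4, .R => [.R, .D, .R]
  | .n1, .L => [.R, .U, .L]
  | .n2, .L => [.L, .U, .L]
  | .n3, .L => [.L, .D, .L]
  | .n4, .L => [.R, .D, .L]
  | .n1, .U => [.U, .R, .U]
  | .n2, .U => [.U, .L, .U]
  | .n3, .U => [.D, .L, .U]
  | .n4, .U => [.D, .R, .U]
  | .n1, .D => [.U, .R, .D]
  | .n2, .D => [.U, .L, .D]
  | .n3, .D => [.D, .L, .D]
  | .n4, .D => [.D, .R, .D]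
  | _, _ => []

def phi1 : Letter → Set (List Letter)
  | .n1 => {[.U, .R], [.R, .U]}
  | .n2 => {[.U, .L], [.L, .U]}
  | .n3 => {[.D, .L], [.L, .D]}
  | .n4 => {[.R, .D], [.D, .R]}
  | _ => ∅

def phiInv2 : Letter → Letter → Letter
  | .U, .R => .n1
  | .R, .U => .n1
  | .U, .L => .n2
  | .L, .U => .n2
  | .D, .L => .n3
  | .L, .D => .n3
  | .R, .D => .n4
  | .D, .R => .n4
  | _, _ => .n1

/-- `φ(u)`, as a set of words: a two-element set when `u` is a single numeral,
a singleton `{φ(u)}` when `u` is a strict pin word of length at least 2, and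
the identity (as a singleton) on words of `M`. -/
def phiSet : List Letter → Set (List Letter)
  | [] => {[]}
  | [c] => if c.isNum then phi1 c else {[c]}
  | c :: d :: rest => if c.isNum then {phi2 c d ++ rest} else {c :: d :: rest}

/-- The quadrant numeral `q(c,d)`. -/
def quadNum (c d : Letter) : Letter :=
  if c.isNum then
    match phi2 c d with
    | [_, b, e] => phiInv2 b e
    | _ => Letter.n1
  else phiInv2 c d

/-- `us` is the strong numeral-led factor decomposition of `u`. -/
def IsSNLD (u : List Letter) (us : List (List Letter)) : Prop :=
  us.flatten = u ∧ ∀ v ∈ us, IsStrict v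

def interleave : List (List Letter) → List (List Letter) → List Letter
  | [], _ => []
  | v :: vs, [] => v ++ interleave vs []
  | v :: vs, w :: ws => v ++ w ++ interleave vs ws

/-- The condition on the pieces `v^(i)`, `w^(i)`, `u^(i)` in the definition of `≼`. -/
def PieceCond (v wi ui : List Letter) : Prop :=
  (∃ c cs, wi = c :: cs ∧ c.IsNumeral ∧ wi = ui) ∨
  (∃ d ds c, wi = d :: ds ∧ d.IsDirection ∧ v ≠ [] ∧ v.getLast? = some c ∧
    ui = quadNum c d :: ds)

/-- The order `u ≼ w` on pin words. -/
def PinOrder (u w : List Letter) : Prop :=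
  ∃ us, IsSNLD u us ∧
    ∃ vs ws : List (List Letter), ws.length = us.length ∧ vs.length = us.length + 1 ∧
      w = interleave vs ws ∧
      ∀ i < us.length, PieceCond (vs.getD i []) (ws.getD i []) (us.getD i [])

def IsVert (c : Letter) : Prop := c = Letter.U ∨ c = Letter.D
def IsHoriz (c : Letter) : Prop := c = Letter.L ∨ c = Letter.R

/-- `M`: words over `{U,D,L,R}` of length at least 2 with no factor in
`{UU,UD,DU,DD,LL,LR,RL,RR}`. -/
def MSet : Set (List Letter) :=
  { w | 2 ≤ w.length ∧ (∀ c ∈ w, c.IsDirection) ∧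
        ∀ a c : Letter, [a, c] <:+: w →
          ¬(IsVert a ∧ IsVert c) ∧ ¬(IsHoriz a ∧ IsHoriz c) }

/-- `A*`: all words over the direction alphabet `A = {U,D,L,R}`. -/
def Astar : Set (List Letter) := { w | ∀ c ∈ w, c.IsDirection }

/-- Concatenation of languages. -/
def LMul (X Y : Set (List Letter)) : Set (List Letter) :=
  { w | ∃ x ∈ X, ∃ y ∈ Y, w = x ++ y }

/-- The language `L(u) = A* φ(u^(1)) A* φ(u^(2)) … A* φ(u^(j)) A*`. -/
def LangOf (u : List Letter) : Set (List Letter) :=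
  { m | ∃ us, IsSNLD u us ∧
      ∃ vs ws : List (List Letter), ws.length = us.length ∧ vs.length = us.length + 1 ∧
        m = interleave vs ws ∧ (∀ v ∈ vs, v ∈ Astar) ∧
        ∀ i < us.length, ws.getD i [] ∈ phiSet (us.getD i []) }

/-- The language `L_π = ⋃_{u ∈ P(π)} L(u)`. -/
def Lperm {n : ℕ} (π : Equiv.Perm (Fin n)) : Set (List Letter) :=
  { m | ∃ u ∈ PinWords π, m ∈ LangOf u }

/-- `π ≤ σ`: the permutation `π` is a pattern of the permutation `σ`. -/
def IsPattern {k n : ℕ} (π : Equiv.Perm (Fin k)) (σ : Equiv.Perm (Fin n)) : Prop :=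
  ∃ g : Fin k → Fin n, StrictMono g ∧ ∀ a b : Fin k, (π a < π b ↔ σ (g a) < σ (g b))

/-- `q i` lies in the quadrant (given by a numeral letter) of the bounding box of
`{q j | j < m}`. -/
def InQuadOf (q : ℕ → Point) (i m : ℕ) : Letter → Prop
  | .n1 => (∀ j < m, (q j).1 < (q i).1) ∧ (∀ j < m, (q j).2 < (q i).2)
  | .n2 => (∀ j < m, (q i).1 < (q j).1) ∧ (∀ j < m, (q j).2 < (q i).2)
  | .n3 => (∀ j < m, (q i).1 < (q j).1) ∧ (∀ j < m, (q i).2 < (q j).2)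
  | .n4 => (∀ j < m, (q j).1 < (q i).1) ∧ (∀ j < m, (q i).2 < (q j).2)
  | _ => False


/-- `σ = ⊕[π_0, …, π_(r-1)]` where the `k`-th child occupies positions and values
`[b k, b (k+1))`. -/
def SumDecomp {n : ℕ} (σ : Equiv.Perm (Fin n)) (r : ℕ) (b : ℕ → ℕ) : Prop :=
  b 0 = 0 ∧ b r = n ∧ (∀ k < r, b k < b (k + 1)) ∧
  ∀ k < r, ∀ i : Fin n, b k ≤ i.val → i.val < b (k + 1) →
    b k ≤ (σ i).val ∧ (σ i).val < b (k + 1)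

/-- The child of `σ` occupying positions `[lo, hi)` is ⊕-indecomposable. -/
def ChildIndecomp {n : ℕ} (σ : Equiv.Perm (Fin n)) (lo hi : ℕ) : Prop :=
  ¬ ∃ m, lo < m ∧ m < hi ∧ ∀ i : Fin n, lo ≤ i.val → i.val < m → (σ i).val < m

/-- The pin read at time `a` belongs to the `k`-th child (`f` sends times to positions). -/
def PinInChild {n : ℕ} (b : ℕ → ℕ) (f : Fin n ≃ Fin n) (a : Fin n) (k : ℕ) : Prop :=
  b k ≤ (f a).val ∧ (f a).val < b (k + 1)

/-- The set of (times of) pins belonging to the `k`-th child. -/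
def ChildPins {n : ℕ} (b : ℕ → ℕ) (f : Fin n ≃ Fin n) (k : ℕ) : Set (Fin n) :=
  { a | PinInChild b f a k }

/-- The starting times of the maximal runs of consecutive reading times in `S`. -/
def PieceStarts {n : ℕ} (S : Set (Fin n)) : Set (Fin n) :=
  { a | a ∈ S ∧ ∀ c : Fin n, c.val + 1 = a.val → c ∉ S }

/-- `S` is read in exactly `k` pieces. -/
def ReadInPieces {n : ℕ} (S : Set (Fin n)) (k : ℕ) : Prop := (PieceStarts S).ncard = k

/-- The pins of `D` are all read before the pins of `C`. -/
def ReadBefore {n : ℕ} (D C : Set (Fin n)) : Prop := ∀ a ∈ D, ∀ c ∈ C, a < c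

/-- The infinite oscillating sequence `ω = 3 1 5 2 7 4 9 6 …` (1-indexed). -/
def omegaSeq (i : ℕ) : ℕ := if i = 2 then 1 else if i % 2 = 1 then i + 2 else i - 2

/-- `π` is a pattern of some prefix of the infinite oscillating sequence `ω`. -/
def IsOmegaPattern {k : ℕ} (π : Equiv.Perm (Fin k)) : Prop :=
  ∃ g : Fin k → ℕ, StrictMono g ∧ (∀ a, 1 ≤ g a) ∧
    ∀ a b : Fin k, (π a < π b ↔ omegaSeq (g a) < omegaSeq (g b))

/-- The interval of positions `[lo, lo+len)` is a block of `σ`. -/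
def IsBlockOf {n : ℕ} (σ : Equiv.Perm (Fin n)) (lo len : ℕ) : Prop :=
  lo + len ≤ n ∧ ∃ vlo, ∀ i : Fin n,
    (lo ≤ i.val ∧ i.val < lo + len) ↔ (vlo ≤ (σ i).val ∧ (σ i).val < vlo + len)

/-- `σ` is a simple permutation. -/
def IsSimplePerm {n : ℕ} (σ : Equiv.Perm (Fin n)) : Prop :=
  4 ≤ n ∧ ∀ lo len, IsBlockOf σ lo len → len ≤ 1 ∨ len = n

/-- `π` is the permutation whose one-line notation is the list `l`. -/
def PermMatches {k : ℕ} (π : Equiv.Perm (Fin k)) (l : List ℕ) : Prop :=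
  l.length = k ∧ ∀ i : Fin k, (π i).val + 1 = l.getD i.val 0

/-- `ξ` is an increasing oscillation. -/
def IsIncrOsc {k : ℕ} (ξ : Equiv.Perm (Fin k)) : Prop :=
  PermMatches ξ [1] ∨ PermMatches ξ [2, 1] ∨ PermMatches ξ [2, 3, 1] ∨
  PermMatches ξ [3, 1, 2] ∨ (4 ≤ k ∧ IsSimplePerm ξ ∧ IsOmegaPattern ξ)

/-- The child of `σ` occupying positions `[lo, hi)` is order-isomorphic to `ξ`. -/
def ChildIsPerm {n m : ℕ} (σ : Equiv.Perm (Fin n)) (lo hi : ℕ)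
    (ξ : Equiv.Perm (Fin m)) : Prop :=
  lo + m = hi ∧ ∀ (a c : Fin m) (ia ic : Fin n), ia.val = lo + a.val → ic.val = lo + c.val →
    ((σ ia).val < (σ ic).val ↔ (ξ a).val < (ξ c).val)

/-- The child of `σ` occupying positions `[lo, hi)` is an increasing oscillation. -/
def ChildIsIncrOsc {n : ℕ} (σ : Equiv.Perm (Fin n)) (lo hi : ℕ) : Prop :=
  ∃ (m : ℕ) (ξ : Equiv.Perm (Fin m)), IsIncrOsc ξ ∧ ChildIsPerm σ lo hi ξ

/-- `τ = ⊕[ξ, η]`. -/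
def IsDSum2 {m k l : ℕ} (τ : Equiv.Perm (Fin m)) (ξ : Equiv.Perm (Fin k))
    (η : Equiv.Perm (Fin l)) : Prop :=
  m = k + l ∧ (∀ i : Fin m, i.val < k → (τ i).val < k) ∧
    ChildIsPerm τ 0 k ξ ∧ ChildIsPerm τ k m η

/-- The origin `p0` lies in quadrant 1 of the bounding box of `{p j | j < n}`. -/
def OriginQ1 (p0 : Point) (p : ℕ → Point) (n : ℕ) : Prop :=
  ∀ j < n, (p j).1 < p0.1 ∧ (p j).2 < p0.2

/-- The origin `p0` lies in quadrant 3 of the bounding box of `{p j | j < n}`. -/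
def OriginQ3 (p0 : Point) (p : ℕ → Point) (n : ℕ) : Prop :=
  ∀ j < n, p0.1 < (p j).1 ∧ p0.2 < (p j).2

/-- `P^(1)(ξ)`: pin words of `ξ` whose origin lies in quadrant 1 w.r.t. the points of `ξ`. -/
def PinWordsQ1 {n : ℕ} (ξ : Equiv.Perm (Fin n)) : Set (List Letter) :=
  { w | ∃ (p : ℕ → Point) (p0 : Point), IsPinRepr ξ p ∧
        IsPinSeq (withOrigin p0 p) (n + 1) ∧ WordOf (withOrigin p0 p) n w ∧ OriginQ1 p0 p n }

/-- `P^(3)(ξ)`: pin words of `ξ` whose origin lies in quadrant 3 w.r.t. the points of `ξ`. -/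
def PinWordsQ3 {n : ℕ} (ξ : Equiv.Perm (Fin n)) : Set (List Letter) :=
  { w | ∃ (p : ℕ → Point) (p0 : Point), IsPinRepr ξ p ∧
        IsPinSeq (withOrigin p0 p) (n + 1) ∧ WordOf (withOrigin p0 p) n w ∧ OriginQ3 p0 p n }

/-- The shuffle product of two sequences of sets of words. -/
def ShuffleSeq : List (Set (List Letter)) → List (Set (List Letter)) → Set (List Letter)
  | [], [] => {[]}
  | X :: As, [] => { w | ∃ x ∈ X, ∃ t ∈ ShuffleSeq As [], w = x ++ t }
  | [], Y :: Bs => { w | ∃ y ∈ Y, ∃ t ∈ ShuffleSeq ([] : List (Set (List Letter))) Bs, w = y ++ t }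
  | X :: As, Y :: Bs =>
      { w | (∃ x ∈ X, ∃ t ∈ ShuffleSeq As (Y :: Bs), w = x ++ t) ∨
            (∃ y ∈ Y, ∃ t ∈ ShuffleSeq (X :: As) Bs, w = y ++ t) }
  termination_by A B => A.length + B.length

/-- The `p`-fold repetition `x^p` of the word `x`. -/
def repW (p : ℕ) (x : List Letter) : List Letter := (List.replicate p x).flatten

/-- The points of `ξ` at positions `i` and `j` form an active knight of `ξ`:
they occur (in some order) as the first two pins of some pin representation of `ξ`. -/
def ActiveKnight {k : ℕ} (ξ : Equiv.Perm (Fin k)) (i j : Fin k) : Prop :=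
  ∃ (p : ℕ → Point) (f : Fin k ≃ Fin k) (h2 : 2 ≤ k),
    IsPinReprWith ξ p f ∧
    ((f ⟨0, by omega⟩ = i ∧ f ⟨1, by omega⟩ = j) ∨
     (f ⟨0, by omega⟩ = j ∧ f ⟨1, by omega⟩ = i))

/-- The points at positions `i`, `j` are in horizontal knight position. -/
def KnightH {k : ℕ} (ξ : Equiv.Perm (Fin k)) (i j : Fin k) : Prop :=
  (i.val + 2 = j.val ∨ j.val + 2 = i.val) ∧
  ((ξ i).val + 1 = (ξ j).val ∨ (ξ j).val + 1 = (ξ i).val)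

/-- The points at positions `i`, `j` are in vertical knight position. -/
def KnightV {k : ℕ} (ξ : Equiv.Perm (Fin k)) (i j : Fin k) : Prop :=
  (i.val + 1 = j.val ∨ j.val + 1 = i.val) ∧
  ((ξ i).val + 2 = (ξ j).val ∨ (ξ j).val + 2 = (ξ i).val)

inductive KType : Type
  | H | V

def KnightOfType {k : ℕ} (t : KType) (ξ : Equiv.Perm (Fin k)) (i j : Fin k) : Prop :=
  match t with
  | .H => KnightH ξ i j
  | .V => KnightV ξ i j

/-- The increasing oscillation `ξ` has type `(x, y)`: its lower-left active knight
(the one containing the leftmost point) has knight-position type `x` and its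
upper-right active knight (the one containing the rightmost point) has type `y`. -/
def HasOscType {k : ℕ} (ξ : Equiv.Perm (Fin k)) (x y : KType) : Prop :=
  ∃ i j i' j' : Fin k, ActiveKnight ξ i j ∧ ActiveKnight ξ i' j' ∧
    i.val = 0 ∧ j'.val + 1 = k ∧ KnightOfType x ξ i j ∧ KnightOfType y ξ i' j'

/-- The permutation 21. -/
def perm21 : Equiv.Perm (Fin 2) := Equiv.swap 0 1

/-- The permutation 12. -/
def perm12 : Equiv.Perm (Fin 2) := Equiv.refl (Fin 2)

def EndsH (w : List Letter) : Prop := w.getLast? = some Letter.R ∨ w.getLast? = some Letter.L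
def EndsV (w : List Letter) : Prop := w.getLast? = some Letter.U ∨ w.getLast? = some Letter.D

/-- `Q⁻`: quasi-strict pin words of 21. -/
def Qminus : Set (List Letter) := { w | w ∈ PinWords perm21 ∧ IsQuasiStrict w }
/-- `S⁻_H`: strict pin words of 21 ending with R or L. -/
def SminusH : Set (List Letter) := { w | w ∈ PinWords perm21 ∧ IsStrict w ∧ EndsH w }
/-- `S⁻_V`: strict pin words of 21 ending with U or D. -/
def SminusV : Set (List Letter) := { w | w ∈ PinWords perm21 ∧ IsStrict w ∧ EndsV w }
/-- `Q⁺`: quasi-strict pin words of 12. -/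
def Qplus : Set (List Letter) := { w | w ∈ PinWords perm12 ∧ IsQuasiStrict w }
/-- `S⁺_H`: strict pin words of 12 ending with R or L. -/
def SplusH : Set (List Letter) := { w | w ∈ PinWords perm12 ∧ IsStrict w ∧ EndsH w }
/-- `S⁺_V`: strict pin words of 12 ending with U or D. -/
def SplusV : Set (List Letter) := { w | w ∈ PinWords perm12 ∧ IsStrict w ∧ EndsV w }

/-- `P^mix(ξ_i, ξ_j)` for `τ = ⊕[ξ_i, ξ_j]` with `|ξ_i| = s1`: pin words associated
with a pin representation of `τ` reading one of the two children in two pieces. -/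
def Pmix {m : ℕ} (τ : Equiv.Perm (Fin m)) (s1 : ℕ) : Set (List Letter) :=
  { w | ∃ (p : ℕ → Point) (p0 : Point) (f : Fin m ≃ Fin m),
      IsPinReprWith τ p f ∧ IsPinSeq (withOrigin p0 p) (m + 1) ∧
      WordOf (withOrigin p0 p) m w ∧
      (ReadInPieces { a : Fin m | (f a).val < s1 } 2 ∨
       ReadInPieces { a : Fin m | s1 ≤ (f a).val } 2) }

/-- The set of words `{13, 23, 33, 43, 1D, 4D}`. -/
def W13D : Set (List Letter) :=
  {[Letter.n1, Letter.n3], [Letter.n2, Letter.n3], [Letter.n3, Letter.n3],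
   [Letter.n4, Letter.n3], [Letter.n1, Letter.D], [Letter.n4, Letter.D]}

/-- The set of words `{13, 23, 33, 43, 1L, 2L}`. -/
def W13L : Set (List Letter) :=
  {[Letter.n1, Letter.n3], [Letter.n2, Letter.n3], [Letter.n3, Letter.n3],
   [Letter.n4, Letter.n3], [Letter.n1, Letter.L], [Letter.n2, Letter.L]}

/-- `M_2 = {UR, UL, DR, DL, RU, RD, LU, LD}`. -/
def M2Set : Set (List Letter) :=
  {[Letter.U, Letter.R], [Letter.U, Letter.L], [Letter.D, Letter.R], [Letter.D, Letter.L],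
   [Letter.R, Letter.U], [Letter.R, Letter.D], [Letter.L, Letter.U], [Letter.L, Letter.D]}

/-- `E^s_π`: the words `φ(u)` for `u ∈ P(π)` strict. -/
def EsSet {n : ℕ} (π : Equiv.Perm (Fin n)) : Set (List Letter) :=
  { v | ∃ u ∈ PinWords π, IsStrict u ∧ v ∈ phiSet u }

/-- `E^qs_π`: the words `φ(u^(2))` for `u = u^(1)u^(2) ∈ P(π)` quasi-strict. -/
def EqsSet {n : ℕ} (π : Equiv.Perm (Fin n)) : Set (List Letter) :=
  { v | ∃ u ∈ PinWords π, IsQuasiStrict u ∧ ∃ u1 u2, IsSNLD u [u1, u2] ∧ v ∈ phiSet u2 }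



section Statement13Aux

open Finset

private lemma card_filter_val_lt {m : ℕ} (c : ℕ) (hc : c ≤ m) :
    (Finset.univ.filter (fun x : Fin m => x.val < c)).card = c := by
  have key : (Finset.univ.filter (fun x : Fin m => x.val < c)).card
      = (Finset.univ : Finset (Fin c)).card :=
    Finset.card_bij'
      (fun (x : Fin m) (hx : x ∈ Finset.univ.filter (fun x : Fin m => x.val < c)) =>
        (⟨x.val, (Finset.mem_filter.mp hx).2⟩ : Fin c))
      (fun (z : Fin c) _ => (⟨z.val, lt_of_lt_of_le z.isLt hc⟩ : Fin m))
      (fun a ha => Finset.mem_univ _)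
      (fun z hz => Finset.mem_filter.mpr ⟨Finset.mem_univ _, z.isLt⟩)
      (fun a ha => rfl) (fun z hz => rfl)
  simpa using key

private lemma bmono' (b : ℕ → ℕ) (r : ℕ) (hb : ∀ k < r, b k < b (k + 1)) :
    ∀ j k, j ≤ k → k ≤ r → b j ≤ b k := by
  intro j k hjk hkr
  induction k with
  | zero => have : j = 0 := by omega
            subst this; exact le_rfl
  | succ k ih =>
    rcases Nat.eq_or_lt_of_le hjk with h | h
    · rw [h]
    · exact le_trans (ih (by omega) (by omega)) (le_of_lt (hb k (by omega)))

private lemma oscNoSplit {m : ℕ} (ξ : Equiv.Perm (Fin m)) (hξ : IsIncrOsc ξ)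
    (P : Fin m → Prop) (h1 : ∃ x, P x) (h2 : ∃ y, ¬ P y)
    (hlt : ∀ x y, P x → ¬ P y → x < y ∧ ξ x < ξ y) : False := by
  classical
  obtain ⟨x0, hx0⟩ := h1
  obtain ⟨y', hy'⟩ := h2
  set sN := Finset.univ.filter (fun y : Fin m => ¬ P y) with hsN
  have hne : sN.Nonempty := ⟨y', Finset.mem_filter.mpr ⟨Finset.mem_univ _, hy'⟩⟩
  set y0 := sN.min' hne with hy0def
  have hy0 : ¬ P y0 := (Finset.mem_filter.mp (sN.min'_mem hne)).2
  have hy0m : ∀ y, ¬ P y → y0 ≤ y := fun y hy =>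
    sN.min'_le y (Finset.mem_filter.mpr ⟨Finset.mem_univ _, hy⟩)
  have key1 : ∀ x, P x ↔ x < y0 := by
    intro x
    constructor
    · intro h; exact (hlt x y0 h hy0).1
    · intro h; by_contra hn; exact absurd (hy0m x hn) (not_le.mpr h)
  obtain ⟨y1, hy1mem, hy1min⟩ := sN.exists_min_image (fun y => (ξ y).val) hne
  have hy1 : ¬ P y1 := (Finset.mem_filter.mp hy1mem).2
  have key2 : ∀ x, P x ↔ (ξ x).val < (ξ y1).val := by
    intro x
    constructor
    · intro h; exact (hlt x y1 h hy1).2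
    · intro h; by_contra hn
      exact absurd (hy1min x (Finset.mem_filter.mpr ⟨Finset.mem_univ _, hn⟩)) (not_le.mpr h)
  have cardA : (Finset.univ.filter P).card = y0.val := by
    have heq : Finset.univ.filter P = Finset.univ.filter (fun x : Fin m => x.val < y0.val) := by
      apply Finset.filter_congr
      intro x _
      rw [key1 x, Fin.lt_def]
    rw [heq, card_filter_val_lt _ (le_of_lt y0.isLt)]
  have cardB : (Finset.univ.filter P).card = (ξ y1).val := by
    have heq : Finset.univ.filter P
        = Finset.univ.filter (fun x : Fin m => (ξ x).val < (ξ y1).val) := by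
      apply Finset.filter_congr
      intro x _
      rw [key2 x]
    have hbij : (Finset.univ.filter (fun x : Fin m => (ξ x).val < (ξ y1).val)).card
        = (Finset.univ.filter (fun z : Fin m => z.val < (ξ y1).val)).card :=
      Finset.card_bij' (fun (x : Fin m) _ => ξ x) (fun (z : Fin m) _ => ξ.symm z)
        (fun a ha => Finset.mem_filter.mpr ⟨Finset.mem_univ _, (Finset.mem_filter.mp ha).2⟩)
        (fun z hz => Finset.mem_filter.mpr ⟨Finset.mem_univ _, by
          simpa using (Finset.mem_filter.mp hz).2⟩)
        (fun a _ => ξ.symm_apply_apply a) (fun z _ => ξ.apply_symm_apply z)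
    rw [heq, hbij, card_filter_val_lt _ (le_of_lt (ξ y1).isLt)]
  have hvals : (ξ y1).val = y0.val := by omega
  have hblock : ∀ x : Fin m, (x.val < y0.val ↔ (ξ x).val < y0.val) := by
    intro x
    constructor
    · intro h
      have := (key2 x).mp ((key1 x).mpr (Fin.lt_def.mpr h))
      omega
    · intro h
      have := Fin.lt_def.mp ((key1 x).mp ((key2 x).mpr (by omega)))
      omega
  have hs1 : 0 < y0.val := by
    have hx := (key1 x0).mp hx0
    have := Fin.lt_def.mp hx
    omega
  have hs2 : y0.val < m := y0.isLt
  rcases hξ with h | h | h | h | ⟨hm4, hsimp, -⟩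
  · have hm : 1 = m := by simpa using h.1
    omega
  · obtain ⟨hm, hv⟩ := h
    have hm' : 2 = m := by simpa using hm
    subst hm'
    have h0 := hv 0
    have hb := hblock 0
    norm_num [List.getD] at h0
    omega
  · obtain ⟨hm, hv⟩ := h
    have hm' : 3 = m := by simpa using hm
    subst hm'
    have h0 := hv 0
    have h2 := hv 2
    have hb0 := hblock 0
    have hb2 := hblock 2
    norm_num [List.getD] at h0 h2
    have hv2 : ((2 : Fin 3) : ℕ) = 2 := rfl
    rw [hv2] at hb2
    omega
  · obtain ⟨hm, hv⟩ := h
    have hm' : 3 = m := by simpa using hm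
    subst hm'
    have h0 := hv 0
    have hb0 := hblock 0
    norm_num [List.getD] at h0
    omega
  · obtain ⟨-, hblocks⟩ := hsimp
    have hmpos : 0 < m := by omega
    have hb1 : IsBlockOf ξ 0 y0.val := by
      refine ⟨by omega, 0, fun i => ?_⟩
      constructor
      · rintro ⟨-, hi⟩
        refine ⟨Nat.zero_le _, ?_⟩
        have := (hblock i).mp (by omega)
        omega
      · rintro ⟨-, hi⟩
        refine ⟨Nat.zero_le _, ?_⟩
        have := (hblock i).mpr (by omega)
        omega
    rcases hblocks 0 y0.val hb1 with h1 | h1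
    · have hy01 : y0.val = 1 := by omega
      have hξ0 : (ξ ⟨0, hmpos⟩).val = 0 := by
        have := (hblock ⟨0, hmpos⟩).mp (by simp only [Fin.val_mk]; omega)
        omega
      have hb2 : IsBlockOf ξ 1 (m - 1) := by
        refine ⟨by omega, 1, fun i => ?_⟩
        have hne : (ξ i).val = 0 ↔ i.val = 0 := by
          constructor
          · intro hv
            have hfe : ξ i = ξ ⟨0, hmpos⟩ := Fin.ext (by rw [hv, hξ0])
            have := ξ.injective hfe
            simpa using congrArg Fin.val this
          · intro hv
            have : i = ⟨0, hmpos⟩ := Fin.ext hv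
            rw [this, hξ0]
        have h1le : i.val < m := i.isLt
        have h2le : (ξ i).val < m := (ξ i).isLt
        omega
      rcases hblocks 1 (m - 1) hb2 with h2 | h2 <;> omega
    · omega

end Statement13Aux

/-- Abstract model of a pin representation of a direct sum:
`X a`, `Y a` are the position and value of the pin read at time `a`,
`C a` is the index of the child it belongs to. -/
private structure PModel (n r : ℕ) where
  b : ℕ → ℕ
  X : Fin n → ℕ
  Y : Fin n → ℕ
  C : Fin n → ℕ
  hb : ∀ k < r, b k < b (k + 1)
  hb0 : b 0 = 0
  hbr : b r = n
  hCr : ∀ a, C a < r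
  hXc : ∀ a, b (C a) ≤ X a ∧ X a < b (C a + 1)
  hYc : ∀ a, b (C a) ≤ Y a ∧ Y a < b (C a + 1)
  hOut : ∀ s : Fin n, 0 < s.val →
      (∀ t < s, X t < X s) ∨ (∀ t < s, X s < X t) ∨
      (∀ t < s, Y t < Y s) ∨ (∀ t < s, Y s < Y t)
  hSI : ∀ s : Fin n, 0 < s.val →
      (∃ sp : Fin n, sp.val + 1 = s.val ∧
        ((X sp < X s ∧ ∀ t < sp, X s < X t) ∨ (X s < X sp ∧ ∀ t < sp, X t < X s) ∨
         (Y sp < Y s ∧ ∀ t < sp, Y s < Y t) ∨ (Y s < Y sp ∧ ∀ t < sp, Y t < Y s)))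
      ∨ (((∀ t < s, X s < X t) ∨ (∀ t < s, X t < X s)) ∧
         ((∀ t < s, Y s < Y t) ∨ (∀ t < s, Y t < Y s)))
  hChild : ∀ k < r, ∃ a : Fin n, C a = k
  hCard : ∀ k < r, (Finset.univ.filter (fun a : Fin n => C a = k)).card = b (k + 1) - b k
  hSplitSW : ∀ k < r, ∀ v : Fin n, C v ≠ k →
      (∀ a a' : Fin n, C a = k → C a' = k → a < v → v < a' → X a' < X a ∧ Y a' < Y a) →
      (∃ a, C a = k ∧ a < v) → (∃ a', C a' = k ∧ v < a') → False
  hSplitNE : ∀ k < r, ∀ v : Fin n, C v ≠ k →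
      (∀ a a' : Fin n, C a = k → C a' = k → a < v → v < a' → X a < X a' ∧ Y a < Y a') →
      (∃ a, C a = k ∧ a < v) → (∃ a', C a' = k ∧ v < a') → False

namespace PModel

variable {n r : ℕ} (M : PModel n r)

private lemma bmono : ∀ j k, j ≤ k → k ≤ r → M.b j ≤ M.b k :=
  bmono' M.b r M.hb

private lemma crossX {a a' : Fin n} (h : M.C a < M.C a') : M.X a < M.X a' :=
  lt_of_lt_of_le (M.hXc a).2
    (le_trans (M.bmono _ _ h (le_of_lt (M.hCr a'))) (M.hXc a').1)

private lemma crossY {a a' : Fin n} (h : M.C a < M.C a') : M.Y a < M.Y a' :=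
  lt_of_lt_of_le (M.hYc a).2
    (le_trans (M.bmono _ _ h (le_of_lt (M.hCr a'))) (M.hYc a').1)

private lemma noMiddle {t1 t2 s : Fin n} (h1 : t1 < s) (h2 : t2 < s)
    (hc1 : M.C t1 < M.C s) (hc2 : M.C s < M.C t2) : False := by
  have hs : 0 < s.val := by
    have := Fin.lt_def.mp h1; omega
  rcases M.hOut s hs with h | h | h | h
  · exact absurd (h t2 h2) (not_lt.mpr (M.crossX hc2).le)
  · exact absurd (h t1 h1) (not_lt.mpr (M.crossX hc1).le)
  · exact absurd (h t2 h2) (not_lt.mpr (M.crossY hc2).le)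
  · exact absurd (h t1 h1) (not_lt.mpr (M.crossY hc1).le)

private lemma jailSW {ts u s : Fin n} (h1 : ts < u) (h2 : u < s) (hc : M.C s < M.C ts) :
    ∀ a : Fin n, a < u → M.C a = M.C s → M.X s < M.X a ∧ M.Y s < M.Y a := by
  intro a hau hca
  have hXts : M.X s < M.X ts := M.crossX hc
  have hYts : M.Y s < M.Y ts := M.crossY hc
  have h1v := Fin.lt_def.mp h1
  have h2v := Fin.lt_def.mp h2
  have hauv := Fin.lt_def.mp hau
  have hs : 0 < s.val := by omega
  have hts_s : ts < s := lt_trans h1 h2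
  have ha_s : a < s := lt_trans hau h2
  have hOut' : (∀ t < s, M.X s < M.X t) ∨ (∀ t < s, M.Y s < M.Y t) := by
    rcases M.hOut s hs with h | h | h | h
    · exact absurd (h ts hts_s) (not_lt.mpr hXts.le)
    · exact Or.inl h
    · exact absurd (h ts hts_s) (not_lt.mpr hYts.le)
    · exact Or.inr h
  rcases M.hSI s hs with ⟨sp, hsp, hsep⟩ | ⟨hix, hiy⟩
  · have hasp : a < sp := Fin.lt_def.mpr (by omega)
    have htssp : ts < sp := Fin.lt_def.mpr (by omega)
    have hsps : sp < s := Fin.lt_def.mpr (by omega)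
    rcases hsep with ⟨hx1, hx2⟩ | ⟨hx1, hx2⟩ | ⟨hy1, hy2⟩ | ⟨hy1, hy2⟩
    · refine ⟨hx2 a hasp, ?_⟩
      rcases hOut' with h | h
      · exact absurd (h sp hsps) (not_lt.mpr hx1.le)
      · exact h a ha_s
    · exact absurd (hx2 ts htssp) (not_lt.mpr hXts.le)
    · refine ⟨?_, hy2 a hasp⟩
      rcases hOut' with h | h
      · exact h a ha_s
      · exact absurd (h sp hsps) (not_lt.mpr hy1.le)
    · exact absurd (hy2 ts htssp) (not_lt.mpr hYts.le)
  · constructor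
    · rcases hix with h | h
      · exact h a ha_s
      · exact absurd (h ts hts_s) (not_lt.mpr hXts.le)
    · rcases hiy with h | h
      · exact h a ha_s
      · exact absurd (h ts hts_s) (not_lt.mpr hYts.le)

private lemma jailNE {ts u s : Fin n} (h1 : ts < u) (h2 : u < s) (hc : M.C ts < M.C s) :
    ∀ a : Fin n, a < u → M.C a = M.C s → M.X a < M.X s ∧ M.Y a < M.Y s := by
  intro a hau hca
  have hXts : M.X ts < M.X s := M.crossX hc
  have hYts : M.Y ts < M.Y s := M.crossY hc
  have h1v := Fin.lt_def.mp h1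
  have h2v := Fin.lt_def.mp h2
  have hauv := Fin.lt_def.mp hau
  have hs : 0 < s.val := by omega
  have hts_s : ts < s := lt_trans h1 h2
  have ha_s : a < s := lt_trans hau h2
  have hOut' : (∀ t < s, M.X t < M.X s) ∨ (∀ t < s, M.Y t < M.Y s) := by
    rcases M.hOut s hs with h | h | h | h
    · exact Or.inl h
    · exact absurd (h ts hts_s) (not_lt.mpr hXts.le)
    · exact Or.inr h
    · exact absurd (h ts hts_s) (not_lt.mpr hYts.le)
  rcases M.hSI s hs with ⟨sp, hsp, hsep⟩ | ⟨hix, hiy⟩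
  · have hasp : a < sp := Fin.lt_def.mpr (by omega)
    have htssp : ts < sp := Fin.lt_def.mpr (by omega)
    have hsps : sp < s := Fin.lt_def.mpr (by omega)
    rcases hsep with ⟨hx1, hx2⟩ | ⟨hx1, hx2⟩ | ⟨hy1, hy2⟩ | ⟨hy1, hy2⟩
    · exact absurd (hx2 ts htssp) (not_lt.mpr hXts.le)
    · refine ⟨hx2 a hasp, ?_⟩
      rcases hOut' with h | h
      · exact absurd (h sp hsps) (not_lt.mpr hx1.le)
      · exact h a ha_s
    · exact absurd (hy2 ts htssp) (not_lt.mpr hYts.le)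
    · refine ⟨?_, hy2 a hasp⟩
      rcases hOut' with h | h
      · exact h a ha_s
      · exact absurd (h sp hsps) (not_lt.mpr hy1.le)
  · constructor
    · rcases hix with h | h
      · exact absurd (h ts hts_s) (not_lt.mpr hXts.le)
      · exact h a ha_s
    · rcases hiy with h | h
      · exact absurd (h ts hts_s) (not_lt.mpr hYts.le)
      · exact h a ha_s


private lemma main (hr : 2 ≤ r) :
    ∃ i, i + 1 < r ∧
      (∀ a : Fin n, (a.val + M.b i < M.b (i + 2)) ↔ (M.C a = i ∨ M.C a = i + 1)) ∧
      (∀ m, m < r → m ≠ i → m ≠ i + 1 →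
        ∀ t v s : Fin n, t < v → v < s → M.C t = m → M.C s = m → M.C v = m) ∧
      (∀ j j' : ℕ, j < j' → j' < i → ∀ a c : Fin n, M.C a = j' → M.C c = j → a < c) ∧
      (∀ j j' : ℕ, i + 2 ≤ j → j < j' → j' < r →
        ∀ a c : Fin n, M.C a = j → M.C c = j' → a < c) := by
  classical
  rcases eq_or_lt_of_le hr with hr2 | hr3
  · -- r = 2 : trivial with i = 0
    refine ⟨0, by omega, ?_, ?_, ?_, ?_⟩
    · intro a
      have h1 := a.isLt
      have h2 := M.hCr a
      have h3 := M.hb0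
      have h5 : M.b 2 = n := by rw [hr2]; exact M.hbr
      simp only [Nat.zero_add]
      omega
    · intro m hm h0 h1
      exfalso; omega
    · intro j j' hjj' hj'
      exfalso; omega
    · intro j j' hj hjj' hj'r
      exfalso; omega
  · -- r ≥ 3
    have hn0 : 0 < n := by
      obtain ⟨a, -⟩ := M.hChild 0 (by omega)
      exact a.pos
    set z0 : Fin n := ⟨0, hn0⟩ with hz0def
    have hz0val : z0.val = 0 := rfl
    set c0 := M.C z0 with hc0def
    have hc0r : c0 < r := M.hCr z0
    have hex1 : ∃ a : Fin n, M.C a ≠ c0 := by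
      rcases Nat.eq_zero_or_pos c0 with h | h
      · obtain ⟨a, ha⟩ := M.hChild 1 (by omega)
        exact ⟨a, by omega⟩
      · obtain ⟨a, ha⟩ := M.hChild 0 (by omega)
        exact ⟨a, by omega⟩
    set S1 := Finset.univ.filter (fun a : Fin n => M.C a ≠ c0) with hS1
    have hS1ne : S1.Nonempty := by
      obtain ⟨a, ha⟩ := hex1
      exact ⟨a, Finset.mem_filter.mpr ⟨Finset.mem_univ _, ha⟩⟩
    set t1 := S1.min' hS1ne with ht1def
    have hCt1 : M.C t1 ≠ c0 := (Finset.mem_filter.mp (S1.min'_mem hS1ne)).2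
    have ht1min : ∀ a : Fin n, a < t1 → M.C a = c0 := by
      intro a ha; by_contra hcon
      exact absurd (S1.min'_le a (Finset.mem_filter.mpr ⟨Finset.mem_univ _, hcon⟩))
        (not_le.mpr ha)
    have hz0t1 : z0 < t1 := by
      have hne : t1.val ≠ 0 := by
        intro h
        apply hCt1
        have hEq : t1 = z0 := Fin.ext (by rw [h, hz0val])
        rw [hEq]
      exact Fin.lt_def.mpr (by omega)
    set c1 := M.C t1 with hc1def
    have hc1r : c1 < r := M.hCr t1
    have hadj : c1 = c0 + 1 ∨ c0 = c1 + 1 := by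
      rcases lt_trichotomy c0 c1 with h | h | h
      · left
        by_contra hcon
        have h2 : c0 + 1 < c1 := by omega
        obtain ⟨a, ha⟩ := M.hChild (c0 + 1) (by omega)
        have hat1 : t1 < a := by
          rcases lt_trichotomy a t1 with h3 | h3 | h3
          · exfalso; have := ht1min a h3; omega
          · exfalso; rw [h3] at ha; omega
          · exact h3
        exact M.noMiddle (lt_trans hz0t1 hat1) hat1 (by omega) (by omega)
      · exfalso; omega
      · right
        by_contra hcon
        have h2 : c1 + 1 < c0 := by omega
        obtain ⟨a, ha⟩ := M.hChild (c1 + 1) (by omega)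
        have hat1 : t1 < a := by
          rcases lt_trichotomy a t1 with h3 | h3 | h3
          · exfalso; have := ht1min a h3; omega
          · exfalso; rw [h3] at ha; omega
          · exact h3
        exact M.noMiddle hat1 (lt_trans hz0t1 hat1) (by omega) (by omega)
    set i := min c0 c1 with hidef
    have hi1r : i + 1 < r := by rcases hadj with h | h <;> omega
    have hio : (M.C z0 = i ∧ M.C t1 = i + 1) ∨ (M.C z0 = i + 1 ∧ M.C t1 = i) := by
      rcases hadj with h | h
      · left; constructor <;> omega
      · right; constructor <;> omega
    have hCz0 : i ≤ M.C z0 ∧ M.C z0 ≤ i + 1 := by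
      rcases hio with ⟨h1, h2⟩ | ⟨h1, h2⟩ <;> omega
    have hex3 : ∃ a : Fin n, ¬ (M.C a = i ∨ M.C a = i + 1) := by
      rcases Nat.eq_zero_or_pos i with h | h
      · obtain ⟨a, ha⟩ := M.hChild 2 (by omega)
        exact ⟨a, by omega⟩
      · obtain ⟨a, ha⟩ := M.hChild 0 (by omega)
        exact ⟨a, by omega⟩
    set S3 := Finset.univ.filter (fun a : Fin n => ¬ (M.C a = i ∨ M.C a = i + 1)) with hS3
    have hS3ne : S3.Nonempty := by
      obtain ⟨a, ha⟩ := hex3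
      exact ⟨a, Finset.mem_filter.mpr ⟨Finset.mem_univ _, ha⟩⟩
    set T3 := S3.min' hS3ne with hT3def
    have hT3 : ¬ (M.C T3 = i ∨ M.C T3 = i + 1) :=
      (Finset.mem_filter.mp (S3.min'_mem hS3ne)).2
    have hT3i : M.C T3 ≠ i := fun hh => hT3 (Or.inl hh)
    have hT3i1 : M.C T3 ≠ i + 1 := fun hh => hT3 (Or.inr hh)
    have hT3min : ∀ a : Fin n, a < T3 → (M.C a = i ∨ M.C a = i + 1) := by
      intro a ha; by_contra hcon
      exact absurd (S3.min'_le a (Finset.mem_filter.mpr ⟨Finset.mem_univ _, hcon⟩))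
        (not_le.mpr ha)
    have hz0T3 : z0 < T3 := by
      have hne : T3.val ≠ 0 := by
        intro h
        have hEq : T3 = z0 := Fin.ext (by rw [h, hz0val])
        rw [hEq] at hT3
        rcases hCz0 with ⟨hh1, hh2⟩
        rcases hio with ⟨hh3, hh4⟩ | ⟨hh3, hh4⟩ <;> exact hT3 (by omega)
      exact Fin.lt_def.mpr (by omega)
    have ht1T3 : t1 < T3 := by
      rcases lt_trichotomy t1 T3 with h | h | h
      · exact h
      · exfalso
        rcases hio with ⟨hh3, hh4⟩ | ⟨hh3, hh4⟩
        · exact hT3i1 (by rw [← h]; exact hh4)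
        · exact hT3i (by rw [← h]; exact hh4)
      · exfalso; have := ht1min T3 h; omega
    obtain ⟨w, w', hw, hw'⟩ :
        ∃ w w' : Fin n, (M.C w = i + 1 ∧ w < T3) ∧ (M.C w' = i ∧ w' < T3) := by
      rcases hio with ⟨h1, h2⟩ | ⟨h1, h2⟩
      · exact ⟨t1, z0, ⟨h2, ht1T3⟩, ⟨h1, hz0T3⟩⟩
      · exact ⟨z0, t1, ⟨h1, hz0T3⟩, ⟨h2, ht1T3⟩⟩
    have hCT3r : M.C T3 < r := M.hCr T3
    have hc2 : M.C T3 = i + 2 ∨ M.C T3 + 1 = i := by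
      rcases lt_trichotomy (M.C T3) i with h | h | h
      · right
        by_contra hcon
        have h2 : M.C T3 + 1 < i := by omega
        obtain ⟨a, ha⟩ := M.hChild (M.C T3 + 1) (by omega)
        have hT3a : T3 < a := by
          rcases lt_trichotomy a T3 with h3 | h3 | h3
          · exfalso; have := hT3min a h3; omega
          · exfalso; rw [h3] at ha; omega
          · exact h3
        exact M.noMiddle hT3a (lt_trans hz0T3 hT3a) (by omega) (by omega)
      · exfalso; omega
      · left
        by_contra hcon
        have h2 : i + 2 < M.C T3 := by omega
        obtain ⟨a, ha⟩ := M.hChild (i + 2) (by omega)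
        have hT3a : T3 < a := by
          rcases lt_trichotomy a T3 with h3 | h3 | h3
          · exfalso; have := hT3min a h3; omega
          · exfalso; rw [h3] at ha; omega
          · exact h3
        exact M.noMiddle (lt_trans hz0T3 hT3a) hT3a (by omega) (by omega)
    have hComp : ∀ a : Fin n, (M.C a = i ∨ M.C a = i + 1) → a < T3 := by
      intro a ha
      rcases lt_trichotomy a T3 with h | h | h
      · exact h
      · exfalso; rw [h] at ha; exact hT3 ha
      · exfalso
        rcases hc2 with hcc | hcc
        · rcases ha with ha | ha
          · refine M.hSplitSW i (by omega) T3 (by omega) ?_ ⟨w', hw'.1, hw'.2⟩ ⟨a, ha, h⟩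
            intro a1 a1' hC1 hC1' hlt1 hlt1'
            exact M.jailSW hw.2 hlt1' (by omega) a1 hlt1 (by omega)
          · exact M.noMiddle (lt_trans hw'.2 h) h (by omega) (by omega)
        · rcases ha with ha | ha
          · exact M.noMiddle h (lt_trans hw.2 h) (by omega) (by omega)
          · refine M.hSplitNE (i + 1) (by omega) T3 (by omega) ?_ ⟨w, hw.1, hw.2⟩ ⟨a, ha, h⟩
            intro a1 a1' hC1 hC1' hlt1 hlt1'
            exact M.jailNE hw'.2 hlt1' (by omega) a1 hlt1 (by omega)
    -- counting for bullet 1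
    have hcardlt : (Finset.univ.filter (fun a : Fin n => a.val < T3.val)).card = T3.val :=
      card_filter_val_lt T3.val (le_of_lt T3.isLt)
    have hfeq : Finset.univ.filter (fun a : Fin n => a.val < T3.val)
        = Finset.univ.filter (fun a : Fin n => M.C a = i ∨ M.C a = i + 1) := by
      apply Finset.filter_congr
      intro a _
      constructor
      · intro h; exact hT3min a (Fin.lt_def.mpr h)
      · intro h; exact Fin.lt_def.mp (hComp a h)
    have hdisj : Disjoint (Finset.univ.filter (fun a : Fin n => M.C a = i))
        (Finset.univ.filter (fun a : Fin n => M.C a = i + 1)) := by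
      rw [Finset.disjoint_left]
      intro a h1 h2
      have h1' := (Finset.mem_filter.mp h1).2
      have h2' := (Finset.mem_filter.mp h2).2
      omega
    have hcardsum : (Finset.univ.filter (fun a : Fin n => M.C a = i ∨ M.C a = i + 1)).card
        = (M.b (i + 1) - M.b i) + (M.b (i + 2) - M.b (i + 1)) := by
      rw [Finset.filter_or, Finset.card_union_of_disjoint hdisj,
        M.hCard i (by omega), M.hCard (i + 1) (by omega)]
    have hbmono1 : M.b i ≤ M.b (i + 1) := le_of_lt (M.hb i (by omega))
    have hbmono2 : M.b (i + 1) ≤ M.b (i + 2) := le_of_lt (M.hb (i + 1) (by omega))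
    have hT3val : T3.val = M.b (i + 2) - M.b i := by
      rw [hfeq] at hcardlt
      omega
    refine ⟨i, hi1r, ?_, ?_, ?_, ?_⟩
    · intro a
      constructor
      · intro h
        exact hT3min a (Fin.lt_def.mpr (by omega))
      · intro h
        have := Fin.lt_def.mp (hComp a h)
        omega
    · intro m hm hmi hmi1 t v s htv hvs hct hcs
      by_contra hcv
      have htvv := Fin.lt_def.mp htv
      have hvsv := Fin.lt_def.mp hvs
      have hz0ltv : z0 < v := Fin.lt_def.mpr (by omega)
      have hz0lts : z0 < s := Fin.lt_def.mpr (by omega)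
      rcases Nat.lt_or_ge i m with him | him
      · rcases lt_trichotomy (M.C v) m with hv | hv | hv
        · refine M.hSplitNE m hm v hcv ?_ ⟨t, hct, htv⟩ ⟨s, hcs, hvs⟩
          intro a1 a1' hC1 hC1' hlt1 hlt1'
          exact M.jailNE hz0ltv hlt1' (by omega) a1 hlt1 (by omega)
        · exact absurd hv hcv
        · exact M.noMiddle hz0lts hvs (by omega) (by omega)
      · have him' : m < i := by omega
        rcases lt_trichotomy (M.C v) m with hv | hv | hv
        · exact M.noMiddle hvs hz0lts (by omega) (by omega)
        · exact absurd hv hcv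
        · refine M.hSplitSW m hm v hcv ?_ ⟨t, hct, htv⟩ ⟨s, hcs, hvs⟩
          intro a1 a1' hC1 hC1' hlt1 hlt1'
          exact M.jailSW hz0ltv hlt1' (by omega) a1 hlt1 (by omega)
    · intro j j' hjj' hj'i a c hca hcc
      rcases lt_trichotomy a c with h | h | h
      · exact h
      · exfalso; rw [h] at hca; omega
      · exfalso
        have hcav := Fin.lt_def.mp h
        have hz0a : z0 < a := Fin.lt_def.mpr (by omega)
        exact M.noMiddle h hz0a (by omega) (by omega)
    · intro j j' hj hjj' hj'r a c hca hcc
      rcases lt_trichotomy a c with h | h | h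
      · exact h
      · exfalso; rw [h] at hca; omega
      · exfalso
        have hcav := Fin.lt_def.mp h
        have hz0a : z0 < a := Fin.lt_def.mpr (by omega)
        exact M.noMiddle hz0a h (by omega) (by omega)

end PModel




private def chIdx (b : ℕ → ℕ) (r v : ℕ) : ℕ := Nat.findGreatest (fun j => b j ≤ v) r

private lemma chIdx_le (b : ℕ → ℕ) (r v : ℕ) (hb0 : b 0 = 0) : b (chIdx b r v) ≤ v :=
  Nat.findGreatest_spec (P := fun j => b j ≤ v) (Nat.zero_le r)
    (by show b 0 ≤ v; rw [hb0]; exact Nat.zero_le _)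

private lemma chIdx_lt (b : ℕ → ℕ) (r v n : ℕ) (hb0 : b 0 = 0) (hbr : b r = n)
    (hv : v < n) : chIdx b r v < r := by
  have hle : chIdx b r v ≤ r := Nat.findGreatest_le r
  rcases Nat.eq_or_lt_of_le hle with h | h
  · exfalso
    have h2 := chIdx_le b r v hb0
    rw [h, hbr] at h2
    omega
  · exact h

private lemma chIdx_ub (b : ℕ → ℕ) (r v n : ℕ) (hb0 : b 0 = 0) (hbr : b r = n)
    (hv : v < n) : v < b (chIdx b r v + 1) := by
  have h2 : chIdx b r v + 1 ≤ r := chIdx_lt b r v n hb0 hbr hv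
  have h3 := Nat.findGreatest_is_greatest (P := fun j => b j ≤ v)
    (Nat.lt_succ_self (chIdx b r v)) h2
  exact not_le.mp h3

private lemma chIdx_eq (b : ℕ → ℕ) (r v n k : ℕ) (hb : ∀ j < r, b j < b (j + 1))
    (hb0 : b 0 = 0) (hbr : b r = n) (hv : v < n)
    (hk : k < r) (h1 : b k ≤ v) (h2 : v < b (k + 1)) : chIdx b r v = k := by
  have hc1 := chIdx_le b r v hb0
  have hc2 := chIdx_ub b r v n hb0 hbr hv
  have hcr := chIdx_lt b r v n hb0 hbr hv
  rcases lt_trichotomy (chIdx b r v) k with h | h | h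
  · exfalso
    have hmm : b (chIdx b r v + 1) ≤ b k := bmono' b r hb _ _ (by omega) (by omega)
    omega
  · exact h
  · exfalso
    have hmm : b (k + 1) ≤ b (chIdx b r v) := bmono' b r hb _ _ (by omega) (by omega)
    omega

private lemma childSplit {n m : ℕ} (f : Fin n ≃ Fin n) (π : Equiv.Perm (Fin n))
    (lo : ℕ) (hin : lo + m ≤ n)
    (ξ : Equiv.Perm (Fin m)) (hξ : IsIncrOsc ξ)
    (hvals : ∀ (a c : Fin m) (ia ic : Fin n), ia.val = lo + a.val → ic.val = lo + c.val →
      ((π ia).val < (π ic).val ↔ (ξ a).val < (ξ c).val))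
    (Q : Fin n → Prop)
    (h1 : ∃ a : Fin n, lo ≤ (f a).val ∧ (f a).val < lo + m ∧ Q a)
    (h2 : ∃ a : Fin n, lo ≤ (f a).val ∧ (f a).val < lo + m ∧ ¬ Q a)
    (hmono : ∀ a a' : Fin n, lo ≤ (f a).val → (f a).val < lo + m → lo ≤ (f a').val →
      (f a').val < lo + m → ¬ Q a → Q a' →
      (f a').val < (f a).val ∧ (π (f a')).val < (π (f a)).val) : False := by
  classical
  have haxlt : ∀ x : Fin m, lo + x.val < n := fun x => by have := x.isLt; omega
  set ax : Fin m → Fin n := fun x => f.symm ⟨lo + x.val, haxlt x⟩ with haxdef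
  have haxval : ∀ x : Fin m, (f (ax x)).val = lo + x.val := by
    intro x
    simp only [haxdef, Equiv.apply_symm_apply]
  have hidx : ∀ a : Fin n, lo ≤ (f a).val → (f a).val < lo + m → ∃ x : Fin m, ax x = a := by
    intro a hal hau
    refine ⟨⟨(f a).val - lo, by omega⟩, ?_⟩
    simp only [haxdef]
    rw [Equiv.symm_apply_eq]
    exact Fin.ext (by simp only [Fin.val_mk]; omega)
  obtain ⟨b1, hb11, hb12, hb13⟩ := h1
  obtain ⟨b0, hb01, hb02, hb03⟩ := h2
  obtain ⟨x1, hx1⟩ := hidx b1 hb11 hb12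
  obtain ⟨x0, hx0⟩ := hidx b0 hb01 hb02
  apply oscNoSplit ξ hξ (fun x => Q (ax x)) ⟨x1, by show Q (ax x1); rw [hx1]; exact hb13⟩
    ⟨x0, by show ¬ Q (ax x0); rw [hx0]; exact hb03⟩
  intro x y hPx hPy
  obtain ⟨hX, hY⟩ := hmono (ax y) (ax x)
    (by rw [haxval y]; omega) (by rw [haxval y]; have := y.isLt; omega)
    (by rw [haxval x]; omega) (by rw [haxval x]; have := x.isLt; omega) hPy hPx
  constructor
  · rw [haxval x, haxval y] at hX
    exact Fin.lt_def.mpr (by omega)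
  · exact Fin.lt_def.mpr ((hvals x y (f (ax x)) (f (ax y)) (haxval x) (haxval y)).mp hY)

/-- Let `π = ⊕[ξ_1, …, ξ_r]` where every `ξ_i` is an increasing
oscillation and `p` a pin representation of `π`. There is an index `i` such that the
first `|ξ_i| + |ξ_(i+1)|` pins are exactly the points of the `i`-th and `(i+1)`-th
children, every other child is read in one piece, the children left of the `i`-th one
are read in decreasing index order and the children right of the `(i+1)`-th one in
increasing index order. -/
theorem statement_13 {n r : ℕ} (π : Equiv.Perm (Fin n)) (b : ℕ → ℕ) (hr : 2 ≤ r)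
    (hdec : SumDecomp π r b)
    (hosc : ∀ k < r, ChildIsIncrOsc π (b k) (b (k + 1)))
    (p : ℕ → Point) (f : Fin n ≃ Fin n) (hp : IsPinReprWith π p f) :
    ∃ i, i + 1 < r ∧
      (∀ a : Fin n,
        (a.val + b i < b (i + 2)) ↔ (a ∈ ChildPins b f i ∨ a ∈ ChildPins b f (i + 1))) ∧
      (∀ m < r, m ≠ i → m ≠ i + 1 → ReadInPieces (ChildPins b f m) 1) ∧
      (∀ j j', j < j' → j' < i → ReadBefore (ChildPins b f j') (ChildPins b f j)) ∧
      (∀ j j', i + 2 ≤ j → j < j' → j' < r →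
        ReadBefore (ChildPins b f j) (ChildPins b f j')) := by
  classical
  obtain ⟨hps, hiff⟩ := hp
  obtain ⟨hb0, hbr, hb, hblk⟩ := hdec
  have hxIff : ∀ j t : Fin n, ((p j.val).1 < (p t.val).1 ↔ (f j).val < (f t).val) :=
    fun j t => (hiff j t).1.trans Fin.lt_def
  have hyIff : ∀ j t : Fin n, ((p j.val).2 < (p t.val).2 ↔ (π (f j)).val < (π (f t)).val) :=
    fun j t => (hiff j t).2.trans Fin.lt_def
  have hfvne : ∀ j t : Fin n, j ≠ t → (f j).val ≠ (f t).val :=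
    fun j t hne h => hne (f.injective (Fin.ext h))
  have hgvne : ∀ j t : Fin n, j ≠ t → (π (f j)).val ≠ (π (f t)).val :=
    fun j t hne h => hne (f.injective (π.injective (Fin.ext h)))
  -- child index data
  have hCr' : ∀ a : Fin n, chIdx b r (f a).val < r :=
    fun a => chIdx_lt b r (f a).val n hb0 hbr (f a).isLt
  have hbCa : ∀ a : Fin n, b (chIdx b r (f a).val) ≤ (f a).val :=
    fun a => chIdx_le b r (f a).val hb0
  have hCub : ∀ a : Fin n, (f a).val < b (chIdx b r (f a).val + 1) :=
    fun a => chIdx_ub b r (f a).val n hb0 hbr (f a).isLt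
  have hYc' : ∀ a : Fin n, b (chIdx b r (f a).val) ≤ (π (f a)).val ∧
      (π (f a)).val < b (chIdx b r (f a).val + 1) :=
    fun a => hblk _ (hCr' a) (f a) (hbCa a) (hCub a)
  -- outside box, translated
  have hOutM : ∀ s : Fin n, 0 < s.val →
      (∀ t < s, (f t).val < (f s).val) ∨ (∀ t < s, (f s).val < (f t).val) ∨
      (∀ t < s, (π (f t)).val < (π (f s)).val) ∨
      (∀ t < s, (π (f s)).val < (π (f t)).val) := by
    intro s hs
    obtain ⟨hob, -⟩ := hps.2 s.val hs s.isLt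
    rcases hob with h | h | h | h
    · exact Or.inl (fun t ht => (hxIff t s).mp (h t.val (Fin.lt_def.mp ht)))
    · exact Or.inr (Or.inl (fun t ht => (hxIff s t).mp (h t.val (Fin.lt_def.mp ht))))
    · exact Or.inr (Or.inr (Or.inl (fun t ht => (hyIff t s).mp (h t.val (Fin.lt_def.mp ht)))))
    · exact Or.inr (Or.inr (Or.inr (fun t ht => (hyIff s t).mp (h t.val (Fin.lt_def.mp ht)))))
  -- separation/independence, translated
  have hSIM : ∀ s : Fin n, 0 < s.val →
      (∃ sp : Fin n, sp.val + 1 = s.val ∧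
        (((f sp).val < (f s).val ∧ ∀ t < sp, (f s).val < (f t).val) ∨
         ((f s).val < (f sp).val ∧ ∀ t < sp, (f t).val < (f s).val) ∨
         ((π (f sp)).val < (π (f s)).val ∧ ∀ t < sp, (π (f s)).val < (π (f t)).val) ∨
         ((π (f s)).val < (π (f sp)).val ∧ ∀ t < sp, (π (f t)).val < (π (f s)).val)))
      ∨ (((∀ t < s, (f s).val < (f t).val) ∨ (∀ t < s, (f t).val < (f s).val)) ∧
         ((∀ t < s, (π (f s)).val < (π (f t)).val) ∨
          (∀ t < s, (π (f t)).val < (π (f s)).val))) := by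
    intro s hs
    obtain ⟨-, hcond⟩ := hps.2 s.val hs s.isLt
    rcases hcond with (hv | hh) | hind
    · left
      refine ⟨⟨s.val - 1, by have := s.isLt; omega⟩, show s.val - 1 + 1 = s.val by omega, ?_⟩
      rcases hv with ⟨h1, h2⟩ | ⟨h1, h2⟩
      · exact Or.inl ⟨(hxIff _ s).mp h1,
          fun t ht => (hxIff s t).mp (h2 t.val (Fin.lt_def.mp ht))⟩
      · exact Or.inr (Or.inl ⟨(hxIff s _).mp h1,
          fun t ht => (hxIff t s).mp (h2 t.val (Fin.lt_def.mp ht))⟩)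
    · left
      refine ⟨⟨s.val - 1, by have := s.isLt; omega⟩, show s.val - 1 + 1 = s.val by omega, ?_⟩
      rcases hh with ⟨h1, h2⟩ | ⟨h1, h2⟩
      · exact Or.inr (Or.inr (Or.inl ⟨(hyIff _ s).mp h1,
          fun t ht => (hyIff s t).mp (h2 t.val (Fin.lt_def.mp ht))⟩))
      · exact Or.inr (Or.inr (Or.inr ⟨(hyIff s _).mp h1,
          fun t ht => (hyIff t s).mp (h2 t.val (Fin.lt_def.mp ht))⟩))
    · right
      obtain ⟨hix, hiy⟩ := hind
      constructor
      · by_cases hex : ∃ t : Fin n, t < s ∧ (f t).val < (f s).val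
        · right
          intro t ht
          have hne := hfvne t s (ne_of_lt ht)
          have hnlt : ¬ (f s).val < (f t).val := by
            intro hl
            obtain ⟨t0, ht0, ht0'⟩ := hex
            exact hix ⟨⟨t0.val, Fin.lt_def.mp ht0, (hxIff t0 s).mpr ht0'⟩,
              ⟨t.val, Fin.lt_def.mp ht, (hxIff s t).mpr hl⟩⟩
          omega
        · left
          intro t ht
          have hne := hfvne t s (ne_of_lt ht)
          have hnlt : ¬ (f t).val < (f s).val := fun hl => hex ⟨t, ht, hl⟩
          omega
      · by_cases hex : ∃ t : Fin n, t < s ∧ (π (f t)).val < (π (f s)).val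
        · right
          intro t ht
          have hne := hgvne t s (ne_of_lt ht)
          have hnlt : ¬ (π (f s)).val < (π (f t)).val := by
            intro hl
            obtain ⟨t0, ht0, ht0'⟩ := hex
            exact hiy ⟨⟨t0.val, Fin.lt_def.mp ht0, (hyIff t0 s).mpr ht0'⟩,
              ⟨t.val, Fin.lt_def.mp ht, (hyIff s t).mpr hl⟩⟩
          omega
        · left
          intro t ht
          have hne := hgvne t s (ne_of_lt ht)
          have hnlt : ¬ (π (f t)).val < (π (f s)).val := fun hl => hex ⟨t, ht, hl⟩
          omega
  -- every child is inhabited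
  have hChildM : ∀ k, k < r → ∃ a : Fin n, chIdx b r (f a).val = k := by
    intro k hk
    have hlt : b k < n := by
      have h1 : b (k + 1) ≤ b r := bmono' b r hb _ _ (by omega) le_rfl
      have h2 := hb k hk
      omega
    refine ⟨f.symm ⟨b k, hlt⟩, ?_⟩
    rw [Equiv.apply_symm_apply]
    exact chIdx_eq b r (b k) n k hb hb0 hbr hlt hk le_rfl (hb k hk)
  -- cardinality of each child
  have hCardM : ∀ k, k < r →
      (Finset.univ.filter (fun a : Fin n => chIdx b r (f a).val = k)).card
        = b (k + 1) - b k := by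
    intro k hk
    have hk1n : b (k + 1) ≤ n := by
      rw [← hbr]; exact bmono' b r hb _ _ (by omega) le_rfl
    rw [← Nat.card_Ico]
    refine Finset.card_bij' (fun a _ => (f a).val)
      (fun v hv => f.symm ⟨v, lt_of_lt_of_le (Finset.mem_Ico.mp hv).2 hk1n⟩) ?_ ?_ ?_ ?_
    · intro a ha
      have hCa := (Finset.mem_filter.mp ha).2
      have h1 : b k ≤ (f a).val := by rw [← hCa]; exact hbCa a
      have h2 : (f a).val < b (k + 1) := by rw [← hCa]; exact hCub a
      exact Finset.mem_Ico.mpr ⟨h1, h2⟩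
    · intro v hv
      refine Finset.mem_filter.mpr ⟨Finset.mem_univ _, ?_⟩
      rw [Equiv.apply_symm_apply]
      obtain ⟨h1, h2⟩ := Finset.mem_Ico.mp hv
      exact chIdx_eq b r v n k hb hb0 hbr (by omega) hk h1 h2
    · intro a ha; simp
    · intro v hv; simp
  -- membership iff in terms of the child index
  have hmemIff : ∀ k, k < r → ∀ a : Fin n,
      ((b k ≤ (f a).val ∧ (f a).val < b (k + 1)) ↔ chIdx b r (f a).val = k) := by
    intro k hk a
    constructor
    · rintro ⟨h1, h2⟩
      exact chIdx_eq b r (f a).val n k hb hb0 hbr (f a).isLt hk h1 h2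
    · intro h
      exact ⟨by rw [← h]; exact hbCa a, by rw [← h]; exact hCub a⟩
  -- the two split principles
  have hSplitSWM : ∀ k, k < r → ∀ v : Fin n, chIdx b r (f v).val ≠ k →
      (∀ a a' : Fin n, chIdx b r (f a).val = k → chIdx b r (f a').val = k →
        a < v → v < a' → (f a').val < (f a).val ∧ (π (f a')).val < (π (f a)).val) →
      (∃ a, chIdx b r (f a).val = k ∧ a < v) →
      (∃ a', chIdx b r (f a').val = k ∧ v < a') → False := by
    rintro k hk v hCv hmono ⟨a0, hCa0, ha0⟩ ⟨a1, hCa1, ha1⟩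
    obtain ⟨m, ξ, hξ, hlen, hvals⟩ := hosc k hk
    have hin : b k + m ≤ n := by
      rw [hlen, ← hbr]
      exact bmono' b r hb _ _ (by omega) le_rfl
    have hmem' : ∀ a : Fin n, chIdx b r (f a).val = k →
        (b k ≤ (f a).val ∧ (f a).val < b k + m) := by
      intro a ha
      obtain ⟨h1, h2⟩ := (hmemIff k hk a).mpr ha
      exact ⟨h1, by omega⟩
    refine childSplit f π (b k) hin ξ hξ hvals (fun a => v < a)
      ⟨a1, (hmem' a1 hCa1).1, (hmem' a1 hCa1).2, ha1⟩
      ⟨a0, (hmem' a0 hCa0).1, (hmem' a0 hCa0).2, not_lt.mpr ha0.le⟩ ?_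
    intro a a' h1 h2 h3 h4 hQa hQa'
    have hCa : chIdx b r (f a).val = k := (hmemIff k hk a).mp ⟨h1, by omega⟩
    have hCa' : chIdx b r (f a').val = k := (hmemIff k hk a').mp ⟨h3, by omega⟩
    have hav : a < v := by
      rcases lt_or_eq_of_le (not_lt.mp hQa) with h | h
      · exact h
      · exfalso; rw [h] at hCa; exact hCv hCa
    exact hmono a a' hCa hCa' hav hQa'
  have hSplitNEM : ∀ k, k < r → ∀ v : Fin n, chIdx b r (f v).val ≠ k →
      (∀ a a' : Fin n, chIdx b r (f a).val = k → chIdx b r (f a').val = k →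
        a < v → v < a' → (f a).val < (f a').val ∧ (π (f a)).val < (π (f a')).val) →
      (∃ a, chIdx b r (f a).val = k ∧ a < v) →
      (∃ a', chIdx b r (f a').val = k ∧ v < a') → False := by
    rintro k hk v hCv hmono ⟨a0, hCa0, ha0⟩ ⟨a1, hCa1, ha1⟩
    obtain ⟨m, ξ, hξ, hlen, hvals⟩ := hosc k hk
    have hin : b k + m ≤ n := by
      rw [hlen, ← hbr]
      exact bmono' b r hb _ _ (by omega) le_rfl
    have hmem' : ∀ a : Fin n, chIdx b r (f a).val = k →
        (b k ≤ (f a).val ∧ (f a).val < b k + m) := by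
      intro a ha
      obtain ⟨h1, h2⟩ := (hmemIff k hk a).mpr ha
      exact ⟨h1, by omega⟩
    refine childSplit f π (b k) hin ξ hξ hvals (fun a => a < v)
      ⟨a0, (hmem' a0 hCa0).1, (hmem' a0 hCa0).2, ha0⟩
      ⟨a1, (hmem' a1 hCa1).1, (hmem' a1 hCa1).2, not_lt.mpr ha1.le⟩ ?_
    intro a a' h1 h2 h3 h4 hQa hQa'
    have hCa : chIdx b r (f a).val = k := (hmemIff k hk a).mp ⟨h1, by omega⟩
    have hCa' : chIdx b r (f a').val = k := (hmemIff k hk a').mp ⟨h3, by omega⟩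
    have hva : v < a := by
      rcases lt_or_eq_of_le (not_lt.mp hQa) with h | h
      · exact h
      · exfalso; rw [← h] at hCa; exact hCv hCa
    exact hmono a' a hCa' hCa hQa' hva
  -- assemble the abstract model
  let M : PModel n r := {
    b := b
    X := fun a => (f a).val
    Y := fun a => (π (f a)).val
    C := fun a => chIdx b r (f a).val
    hb := hb
    hb0 := hb0
    hbr := hbr
    hCr := hCr'
    hXc := fun a => ⟨hbCa a, hCub a⟩
    hYc := hYc'
    hOut := hOutM
    hSI := hSIM
    hChild := hChildM
    hCard := hCardM
    hSplitSW := hSplitSWM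
    hSplitNE := hSplitNEM }
  obtain ⟨i, hi1r, hB1, hB2, hB3, hB4⟩ := M.main hr
  have hmem : ∀ k, k < r → ∀ a : Fin n,
      (a ∈ ChildPins b f k ↔ chIdx b r (f a).val = k) := by
    intro k hk a
    simp only [ChildPins, Set.mem_setOf_eq, PinInChild]
    exact hmemIff k hk a
  refine ⟨i, hi1r, ?_, ?_, ?_, ?_⟩
  · intro a
    rw [hmem i (by omega) a, hmem (i + 1) (by omega) a]
    exact hB1 a
  · intro m0 hm0 hne0 hne1
    obtain ⟨t0w, ht0w⟩ := hChildM m0 hm0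
    set Sfin := Finset.univ.filter (fun a : Fin n => chIdx b r (f a).val = m0) with hSfin
    have hSfne : Sfin.Nonempty := ⟨t0w, Finset.mem_filter.mpr ⟨Finset.mem_univ _, ht0w⟩⟩
    set t0 := Sfin.min' hSfne with ht0def
    have ht0C : chIdx b r (f t0).val = m0 := (Finset.mem_filter.mp (Sfin.min'_mem hSfne)).2
    have ht0min : ∀ a : Fin n, chIdx b r (f a).val = m0 → t0 ≤ a :=
      fun a ha => Sfin.min'_le a (Finset.mem_filter.mpr ⟨Finset.mem_univ _, ha⟩)
    have hPS : PieceStarts (ChildPins b f m0) = {t0} := by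
      ext a
      simp only [PieceStarts, Set.mem_setOf_eq, Set.mem_singleton_iff]
      constructor
      · rintro ⟨haS, hnp⟩
        have haC : chIdx b r (f a).val = m0 := (hmem m0 hm0 a).mp haS
        by_contra hne
        have ht0a : t0 < a := lt_of_le_of_ne (ht0min a haC) (fun h => hne h.symm)
        have ht0av := Fin.lt_def.mp ht0a
        have hcval : a.val - 1 < n := by have := a.isLt; omega
        have hcS : (⟨a.val - 1, hcval⟩ : Fin n) ∉ ChildPins b f m0 :=
          hnp ⟨a.val - 1, hcval⟩ (show a.val - 1 + 1 = a.val by omega)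
        have hcC : chIdx b r (f (⟨a.val - 1, hcval⟩ : Fin n)).val ≠ m0 :=
          fun h => hcS ((hmem m0 hm0 _).mpr h)
        rcases lt_trichotomy t0 (⟨a.val - 1, hcval⟩ : Fin n) with h | h | h
        · have hca : (⟨a.val - 1, hcval⟩ : Fin n) < a := Fin.lt_def.mpr (by
            simp only [Fin.val_mk]; omega)
          exact hcC (hB2 m0 hm0 hne0 hne1 t0 ⟨a.val - 1, hcval⟩ a h hca ht0C haC)
        · exact hcC (by rw [← h]; exact ht0C)
        · have h' := Fin.lt_def.mp h
          simp only [Fin.val_mk] at h'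
          omega
      · intro h
        rw [h]
        refine ⟨(hmem m0 hm0 t0).mpr ht0C, ?_⟩
        intro c hc1 hcS
        have hcC := (hmem m0 hm0 c).mp hcS
        have hle := Fin.le_def.mp (ht0min c hcC)
        omega
    show (PieceStarts (ChildPins b f m0)).ncard = 1
    rw [hPS, Set.ncard_singleton]
  · intro j j' hjj' hj'i
    intro a ha c hc
    exact hB3 j j' hjj' hj'i a c ((hmem j' (by omega) a).mp ha) ((hmem j (by omega) c).mp hc)
  · intro j j' hj hjj' hj'r
    intro a ha c hc
    exact hB4 j j' hj hjj' hj'r a c ((hmem j (by omega) a).mp ha) ((hmem j' (by omega) c).mp hc)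

end PinStmt
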